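/- Let G be connected, let ξ be a hierarchically connected plan of G, let 𝒞 be a connected component of the administrative adjacency graph of ξ, and let S be the set of regions of ξ belonging to 𝒞. If Split(S) = |S| − 1, then there exists a tree T, a subgraph of G with vertex set ⋃_{G_k ∈ S} V(G_k), such that (i) for every region G_k ∈ S the restriction of T to V(G_k) (the subgraph with vertex set V(G_k) and the edges of T with both endpoints in V(G_k)) is an η-hierarchical tree on G_k, and (ii) T is an η-hierarchical tree on G[⋃_{G_k ∈ S} V(G_k)]. -/

import Mathlib

open SimpleGraph

namespace Redist

variable {V : Type*} [Fintype V] [DecidableEq V]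

/-- The subgraph of `G` induced by the vertex set `s` (the graph `G[s]`). -/
abbrev ind (G : SimpleGraph V) (s : Set V) : G.Subgraph :=
  (⊤ : G.Subgraph).induce s

/-- `T` is a spanning tree of the subgraph `H` of `G`. -/
def IsSpanningTreeOf (G : SimpleGraph V) (T H : G.Subgraph) : Prop :=
  T ≤ H ∧ T.verts = H.verts ∧ T.coe.IsTree

/-- `τ H`: the number of spanning trees of the subgraph `H`. -/
noncomputable def tau (G : SimpleGraph V) (H : G.Subgraph) : ℕ :=
  {T : G.Subgraph | IsSpanningTreeOf G T H}.ncard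

/-- `C(s, t)`: the set of edges of `G` with one endpoint in `s` and the other in `t`. -/
def crossEdges (G : SimpleGraph V) (s t : Set V) : Set (Sym2 V) :=
  {e | e ∈ G.edgeSet ∧ ∃ u v : V, e = s(u, v) ∧ u ∈ s ∧ v ∈ t}

/-- The subgraph obtained from `H` by adding the edges in `E'` (that are edges of `G`). -/
def withEdges (G : SimpleGraph V) (H : G.Subgraph) (E' : Set (Sym2 V)) : G.Subgraph where
  verts := H.verts ∪ {v | ∃ e ∈ E' ∩ G.edgeSet, v ∈ e}
  Adj u v := H.Adj u v ∨ (s(u, v) ∈ E' ∧ G.Adj u v)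
  adj_sub := by
    rintro u v (h | ⟨-, h⟩)
    · exact H.adj_sub h
    · exact h
  edge_vert := by
    rintro u v (h | ⟨h, hG⟩)
    · exact Or.inl (H.edge_vert h)
    · exact Or.inr ⟨s(u, v), ⟨h, hG⟩, Sym2.mem_mk_left u v⟩
  symm := by
    refine ⟨?_⟩
    rintro u v (h | ⟨h, hG⟩)
    · exact Or.inl (H.adj_symm h)
    · exact Or.inr ⟨by rwa [Sym2.eq_swap], hG.symm⟩

/-- A plan with `r` regions: a partition of the vertex set into `r` nonempty blocks,
each inducing a connected subgraph. -/
structure Plan (G : SimpleGraph V) (r : ℕ) where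
  blocks : Set (Set V)
  ncard_blocks : blocks.ncard = r
  blocks_nonempty : ∀ B ∈ blocks, B.Nonempty
  blocks_disjoint : ∀ B ∈ blocks, ∀ B' ∈ blocks, B ≠ B' → Disjoint B B'
  blocks_cover : ∀ v : V, ∃ B ∈ blocks, v ∈ B
  blocks_connected : ∀ B ∈ blocks, (ind G B).Connected

/-- `ξp` is a 1-region ancestor of `ξr`: exactly one region of `ξp` is not a region of `ξr`. -/
def IsAncestor (G : SimpleGraph V) {r : ℕ} (ξp : Plan G (r - 1)) (ξr : Plan G r) : Prop :=
  (ξp.blocks \ ξr.blocks).ncard = 1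

/-- An `r`-region forest plan: `r` vertex-disjoint trees covering all of `V`. -/
structure ForestPlan (G : SimpleGraph V) (r : ℕ) where
  trees : Set G.Subgraph
  ncard_trees : trees.ncard = r
  isTree : ∀ T ∈ trees, T.coe.IsTree
  trees_disjoint : ∀ T ∈ trees, ∀ T' ∈ trees, T ≠ T' → Disjoint T.verts T'.verts
  trees_cover : ∀ v : V, ∃ T ∈ trees, v ∈ T.verts

/-- The induced plan of a forest plan (as a family of blocks). -/
def forestBlocks (G : SimpleGraph V) {r : ℕ} (F : ForestPlan G r) : Set (Set V) :=
  Subgraph.verts '' F.trees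

/-- `Fp` is a 1-region tree ancestor of `Fr`. -/
def ForestAncestor (G : SimpleGraph V) {r : ℕ} (Fp : ForestPlan G (r - 1))
    (Fr : ForestPlan G r) : Prop :=
  (Fp.trees \ Fr.trees).ncard = 1

variable {A : Type*}

/-- The set of administrative units meeting the vertex set `s`. -/
def unitSet (η : V → A) (s : Set V) : Set A := {a | (s ∩ η ⁻¹' {a}).Nonempty}

/-- A block is hierarchically connected: its intersection with each administrative unit has
at most one connected component. -/
def HierConnectedBlock (G : SimpleGraph V) (η : V → A) (B : Set V) : Prop :=
  ∀ a : A, (ind G (B ∩ η ⁻¹' {a})).coe.Preconnected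

/-- `T` is an `η`-hierarchical tree on the region induced by `B`. -/
def IsHierTree (G : SimpleGraph V) (η : V → A) (T : G.Subgraph) (B : Set V) : Prop :=
  IsSpanningTreeOf G T (ind G B) ∧
    ∀ a : A, (B ∩ η ⁻¹' {a}).Nonempty →
      IsSpanningTreeOf G (T.induce (B ∩ η ⁻¹' {a})) (ind G (B ∩ η ⁻¹' {a}))

/-- Two blocks are administratively adjacent. -/
def AdminAdj (G : SimpleGraph V) (η : V → A) (B B' : Set V) : Prop :=
  ∃ a : A, ∃ u v : V, G.Adj u v ∧ u ∈ B ∩ η ⁻¹' {a} ∧ v ∈ B' ∩ η ⁻¹' {a}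

/-- `S` is (the set of regions of) a connected component of the administrative adjacency
graph of the plan with blocks `blocks`. -/
def IsAdminComponent (G : SimpleGraph V) (η : V → A) (blocks S : Set (Set V)) : Prop :=
  S ⊆ blocks ∧ S.Nonempty ∧
    (∀ B ∈ S, ∀ B' ∈ S,
      Relation.ReflTransGen (fun X Y => X ∈ S ∧ Y ∈ S ∧ AdminAdj G η X Y) B B') ∧
    ∀ B ∈ S, ∀ B' ∈ blocks, B' ∉ S → ¬AdminAdj G η B B'

/-- The number of connected components of the subgraph induced by `s`. -/
noncomputable def numComponents (G : SimpleGraph V) (s : Set V) : ℕ :=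
  Nat.card ((ind G s).coe.ConnectedComponent)

/-- The number of administrative splits of a family `S` of blocks. -/
noncomputable def splits [Fintype A] (G : SimpleGraph V) (η : V → A) (S : Set (Set V)) : ℕ :=
  (∑ᶠ a : A, ∑ᶠ B ∈ S, numComponents G (B ∩ η ⁻¹' {a})) -
    {a : A | ∃ B ∈ S, (B ∩ η ⁻¹' {a}).Nonempty}.ncard

/-- `T` is a hierarchical plan tree for the plan with blocks `blocks`. -/
def IsHierPlanTree (G : SimpleGraph V) (η : V → A) (T : G.Subgraph)
    (blocks : Set (Set V)) : Prop :=
  IsHierTree G η T Set.univ ∧ ∀ B ∈ blocks, IsHierTree G η (T.induce B) B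

/-- The plan with blocks `blocks` is hierarchical. -/
def IsHierPlanBlocks (G : SimpleGraph V) (η : V → A) (blocks : Set (Set V)) : Prop :=
  ∃ T : G.Subgraph, IsHierPlanTree G η T blocks

/-- The effective region tree boundary length between two vertex-disjoint trees. -/
noncomputable def EffB (G : SimpleGraph V) (p : G.Subgraph → Sym2 V → ℝ)
    (Tk Tk' : G.Subgraph) : ℝ :=
  ∑ᶠ e ∈ crossEdges G Tk.verts Tk'.verts, p (withEdges G (Tk ⊔ Tk') {e}) e

/-!
Let `W = ⋃₀ S` and classify the vertices of `W` by their region `β`, their unit `η` and their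
piece `π = (β, η)`. Growing a spanning forest greedily, first inside the pieces, then inside the
regions, and finally along all edges that stay inside a region or inside a unit, gives a spanning
tree `F` of `W` (the regions of `S` are linked by administrative adjacencies) whose restriction to
every piece and to every region is connected. In a forest, the edges inside the fibres of a map `f`
number at most `|W| - |range f|`, with equality exactly when every fibre is connected. An edge of
`F` lies inside a region or inside a unit, and inside both exactly when it lies inside a piece, so
inclusion–exclusion together with `Split(S) = |S| - 1`, which reads
`|range π| + 1 = |range β| + |range η|`, forces equality for `η`: every unit is connected too.
-/

section FiberGraphs

variable {α ι κ : Type*}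

def _root_.SimpleGraph.withinFibers (H : SimpleGraph α) (f : α → ι) : SimpleGraph α where
  Adj u v := H.Adj u v ∧ f u = f v
  symm := ⟨fun _ _ h => ⟨h.1.symm, h.2.symm⟩⟩
  loopless := ⟨fun u h => H.loopless.irrefl u h.1⟩

def _root_.SimpleGraph.PreconnectedFibers (H : SimpleGraph α) (f : α → ι) : Prop :=
  ∀ k, (H.induce (f ⁻¹' {k})).Preconnected

variable {H : SimpleGraph α} {f : α → ι}

@[simp]
lemma _root_.SimpleGraph.withinFibers_adj {u v : α} :
    (H.withinFibers f).Adj u v ↔ H.Adj u v ∧ f u = f v :=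
  Iff.rfl

lemma _root_.SimpleGraph.withinFibers_le (H : SimpleGraph α) (f : α → ι) :
    H.withinFibers f ≤ H :=
  fun _ _ h => h.1

lemma _root_.SimpleGraph.withinFibers_inf_withinFibers (H : SimpleGraph α) (β : α → ι)
    (η : α → κ) : H.withinFibers β ⊓ H.withinFibers η = H.withinFibers fun x => (β x, η x) := by
  ext u v
  simp only [inf_adj, withinFibers_adj, Prod.ext_iff]
  tauto

lemma _root_.SimpleGraph.preconnectedFibers_iff_reachable :
    H.PreconnectedFibers f ↔ ∀ u v, f u = f v → (H.withinFibers f).Reachable u v := by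
  constructor
  · intro h u v huv
    let hom : H.induce (f ⁻¹' {f u}) →g H.withinFibers f :=
      { toFun := Subtype.val
        map_rel' := fun {x y} hxy => ⟨hxy, x.2.trans y.2.symm⟩ }
    exact (h (f u) ⟨u, rfl⟩ ⟨v, huv.symm⟩).map hom
  · rintro h k ⟨u, hu⟩ ⟨v, hv⟩
    obtain ⟨p⟩ := h u v (hu.trans hv.symm)
    induction p with
    | nil => rfl
    | @cons u w v huw p ih =>
      have hw : f w = k := huw.2.symm.trans hu
      have hadj : (H.induce (f ⁻¹' {k})).Adj ⟨u, hu⟩ ⟨w, hw⟩ := huw.1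
      exact hadj.reachable.trans (ih hw hv)

lemma _root_.SimpleGraph.PreconnectedFibers.of_reachable_eq {F₀ F : SimpleGraph α}
    (hH : H.PreconnectedFibers f) (hreach : F₀.Reachable = (H.withinFibers f).Reachable)
    (hle : F₀ ≤ F.withinFibers f) : F.PreconnectedFibers f := by
  rw [preconnectedFibers_iff_reachable] at hH ⊢
  exact fun u v huv => (hreach ▸ hH u v huv).mono hle

lemma _root_.SimpleGraph.IsAcyclic.ncard_edgeSet_add_one_le [Finite α] [Nonempty α]
    {K : SimpleGraph α} (hK : K.IsAcyclic) : K.edgeSet.ncard + 1 ≤ Nat.card α := by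
  obtain ⟨T, hKT, -, hT⟩ := connected_top.exists_isTree_le_of_le_of_isAcyclic le_top hK
  have hTcard : T.edgeSet.ncard + 1 = Nat.card α := by
    simpa using (isTree_iff_connected_and_card.mp hT).2
  have := Set.ncard_le_ncard (edgeSet_mono hKT)
  omega

lemma _root_.SimpleGraph.IsAcyclic.connected_iff_ncard_edgeSet [Finite α] [Nonempty α]
    {K : SimpleGraph α} (hK : K.IsAcyclic) : K.Connected ↔ K.edgeSet.ncard + 1 = Nat.card α := by
  refine ⟨fun hc => by simpa using (isTree_iff_connected_and_card.mp ⟨hc, hK⟩).2,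
    fun hcard => ?_⟩
  obtain ⟨T, hKT, -, hT⟩ := connected_top.exists_isTree_le_of_le_of_isAcyclic le_top hK
  have hTcard : T.edgeSet.ncard + 1 = Nat.card α := by
    simpa using (isTree_iff_connected_and_card.mp hT).2
  have : K.edgeSet = T.edgeSet :=
    Set.eq_of_subset_of_ncard_le (edgeSet_mono hKT) (by omega)
  exact edgeSet_inj.mp this ▸ hT.connected

lemma _root_.SimpleGraph.ncard_edgeSet_withinFibers [Fintype α] [DecidableEq ι]
    (K : SimpleGraph α) (f : α → ι) : (K.withinFibers f).edgeSet.ncard =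
      ∑ k ∈ Finset.univ.image f, (K.induce (f ⁻¹' {k})).edgeSet.ncard := by
  classical
  have hfiber : ∀ k, (K.induce (f ⁻¹' {k})).edgeSet.ncard =
      (K.edgeFinset ∩ (f ⁻¹' {k}).toFinset.sym2).card := by
    intro k
    rw [← map_edgeFinset_induce, Finset.card_map, ← Set.ncard_coe_finset, coe_edgeFinset]
  have hunion : (K.withinFibers f).edgeSet =
      ↑((Finset.univ.image f).biUnion fun k => K.edgeFinset ∩ (f ⁻¹' {k}).toFinset.sym2) := by
    ext e
    induction e using Sym2.ind with
    | _ u v => simp [and_comm, eq_comm]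
  rw [hunion, Set.ncard_coe_finset, Finset.card_biUnion]
  · exact Finset.sum_congr rfl fun k _ => (hfiber k).symm
  · intro k _ l _ hkl
    simp only [Function.onFun, Finset.disjoint_left]
    intro e he he'
    induction e using Sym2.ind with
    | _ u v => simp_all

lemma _root_.SimpleGraph.IsAcyclic.preconnectedFibers_iff [Fintype α] {K : SimpleGraph α}
    (hK : K.IsAcyclic) (f : α → ι) : K.PreconnectedFibers f ↔
      (K.withinFibers f).edgeSet.ncard + Nat.card (Set.range f) = Nat.card α := by
  classical
  set t := Finset.univ.image f
  have hfiber : ∀ k ∈ t, Nonempty (f ⁻¹' {k}) := fun k hk => by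
    obtain ⟨u, -, rfl⟩ := Finset.mem_image.mp hk
    exact ⟨⟨u, rfl⟩⟩
  have hle : ∀ k ∈ t, (K.induce (f ⁻¹' {k})).edgeSet.ncard + 1 ≤ Nat.card (f ⁻¹' {k}) :=
    fun k hk => have := hfiber k hk; (hK.induce _).ncard_edgeSet_add_one_le
  have hsum : (K.withinFibers f).edgeSet.ncard + Nat.card (Set.range f) =
      ∑ k ∈ t, ((K.induce (f ⁻¹' {k})).edgeSet.ncard + 1) := by
    rw [Finset.sum_add_distrib, ncard_edgeSet_withinFibers, Finset.sum_const, smul_eq_mul,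
      mul_one, Nat.card_eq_card_toFinset, Set.toFinset_range]
  have hcard : Nat.card α = ∑ k ∈ t, Nat.card (f ⁻¹' {k}) := by
    rw [Nat.card_eq_fintype_card, ← Finset.card_univ,
      Finset.card_eq_sum_card_fiberwise fun u _ => Finset.mem_image_of_mem f (Finset.mem_univ u)]
    refine Finset.sum_congr rfl fun k _ => ?_
    rw [Nat.card_eq_card_toFinset]
    congr 1
    ext u
    simp
  rw [hsum, hcard, Finset.sum_eq_sum_iff_of_le hle]
  refine ⟨fun h k hk => ?_, fun h k => ?_⟩
  · have := hfiber k hk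
    exact (hK.induce _).connected_iff_ncard_edgeSet.mp ⟨h k⟩
  · by_cases hk : k ∈ t
    · have := hfiber k hk
      exact ((hK.induce _).connected_iff_ncard_edgeSet.mpr (h k hk)).preconnected
    · rintro ⟨u, hu⟩
      exact absurd (Finset.mem_image.mpr ⟨u, Finset.mem_univ u, hu⟩) hk

theorem _root_.SimpleGraph.exists_isTree_preconnectedFibers [Fintype α] (H : SimpleGraph α)
    (β : α → ι) (η : α → κ) (hpiece : H.PreconnectedFibers fun x => (β x, η x))
    (hblock : H.PreconnectedFibers β) (hconn : (H.withinFibers β ⊔ H.withinFibers η).Connected)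
    (hcard : Nat.card (Set.range fun x => (β x, η x)) + 1 =
      Nat.card (Set.range β) + Nat.card (Set.range η)) :
    ∃ F ≤ H, F.IsTree ∧ F.PreconnectedFibers β ∧ F.PreconnectedFibers η ∧
      F.PreconnectedFibers fun x => (β x, η x) := by
  set π := fun x => (β x, η x) with hπ
  obtain ⟨F₀, -, hF₀, hF₀ac, hF₀r⟩ := exists_isAcyclic_reachable_eq_le_of_le_of_isAcyclic
    (G := H.withinFibers π) bot_le isAcyclic_bot
  have hπβ : H.withinFibers π ≤ H.withinFibers β := fun _ _ h => ⟨h.1, congrArg Prod.fst h.2⟩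
  obtain ⟨F₁, h01, hF₁, hF₁ac, hF₁r⟩ :=
    exists_isAcyclic_reachable_eq_le_of_le_of_isAcyclic (hF₀.trans hπβ) hF₀ac
  obtain ⟨F, h1F, hF, hFac, hFr⟩ := exists_isAcyclic_reachable_eq_le_of_le_of_isAcyclic
    (G := H.withinFibers β ⊔ H.withinFibers η) (hF₁.trans le_sup_left) hF₁ac
  have hFtree : F.IsTree :=
    ⟨(connected_iff F).mpr ⟨fun u v => hFr ▸ hconn.preconnected u v, hconn.nonempty⟩, hFac⟩
  have hFπ : F.PreconnectedFibers π :=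
    hpiece.of_reachable_eq hF₀r fun _ _ h => ⟨(h01.trans h1F) h, (hF₀ h).2⟩
  have hFβ : F.PreconnectedFibers β :=
    hblock.of_reachable_eq hF₁r fun _ _ h => ⟨h1F h, (hF₁ h).2⟩
  refine ⟨F, hF.trans (sup_le (withinFibers_le _ _) (withinFibers_le _ _)), hFtree, hFβ, ?_, hFπ⟩
  have hsup : F.withinFibers β ⊔ F.withinFibers η = F := by
    refine le_antisymm (sup_le (withinFibers_le _ _) (withinFibers_le _ _)) fun u v huv => ?_
    rcases hF huv with h | h
    exacts [Or.inl ⟨huv, h.2⟩, Or.inr ⟨huv, h.2⟩]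
  have hincl :=
    Set.ncard_union_add_ncard_inter (F.withinFibers β).edgeSet (F.withinFibers η).edgeSet
  rw [← edgeSet_sup, ← edgeSet_inf, hsup, withinFibers_inf_withinFibers, ← hπ] at hincl
  have htree : F.edgeSet.ncard + 1 = Nat.card α := by
    simpa using (isTree_iff_connected_and_card.mp hFtree).2
  have hβcard := (hFac.preconnectedFibers_iff β).mp hFβ
  have hπcard := (hFac.preconnectedFibers_iff π).mp hFπ
  exact (hFac.preconnectedFibers_iff η).mpr (by omega)

end FiberGraphs

section Regions

variable {α : Type*}

section Partition

variable {S : Set (Set α)}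

noncomputable def partOf (S : Set (Set α)) (w : ⋃₀ S) : Set α :=
  (Set.mem_sUnion.mp w.2).choose

lemma partOf_mem (w : ⋃₀ S) : partOf S w ∈ S :=
  (Set.mem_sUnion.mp w.2).choose_spec.1

lemma mem_partOf (w : ⋃₀ S) : (w : α) ∈ partOf S w :=
  (Set.mem_sUnion.mp w.2).choose_spec.2

lemma partOf_eq_iff (hS : S.PairwiseDisjoint id) {B : Set α} (hB : B ∈ S) (w : ⋃₀ S) :
    partOf S w = B ↔ (w : α) ∈ B :=
  ⟨fun h => h ▸ mem_partOf w, fun hw =>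
    hS.elim (partOf_mem w) hB (Set.not_disjoint_iff.mpr ⟨w, mem_partOf w, hw⟩)⟩

lemma range_partOf (hS : S.PairwiseDisjoint id) (hne : ∀ B ∈ S, B.Nonempty) :
    Set.range (partOf S) = S := by
  refine Set.Subset.antisymm (Set.range_subset_iff.mpr partOf_mem) fun B hB => ?_
  obtain ⟨u, hu⟩ := hne B hB
  exact ⟨⟨u, B, hB, hu⟩, (partOf_eq_iff hS hB _).mpr hu⟩

lemma range_partOf_prod {η : α → A} (hS : S.PairwiseDisjoint id) :
    Set.range (fun w : ⋃₀ S => (partOf S w, η w)) =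
      {p | p.1 ∈ S ∧ (p.1 ∩ η ⁻¹' {p.2}).Nonempty} := by
  ext ⟨B, a⟩
  constructor
  · rintro ⟨w, hw⟩
    obtain ⟨rfl, rfl⟩ := Prod.mk.inj hw
    exact ⟨partOf_mem w, w, mem_partOf w, rfl⟩
  · rintro ⟨hB, u, hu, rfl⟩
    exact ⟨⟨u, B, hB, hu⟩, Prod.ext ((partOf_eq_iff hS hB _).mpr hu) rfl⟩

end Partition

lemma Plan.pairwiseDisjoint {G : SimpleGraph α} {r : ℕ} (ξ : Plan G r) :
    ξ.blocks.PairwiseDisjoint id :=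
  fun B hB B' hB' h => ξ.blocks_disjoint B hB B' hB' h

section InducedGraph

variable {ι : Type*} {G : SimpleGraph α} {W : Set α}

lemma preconnectedFibers_induce {f : W → ι}
    (h : ∀ u : W, ∃ s ⊆ W, (G.induce s).Preconnected ∧ ∀ w : W, f w = f u ↔ (w : α) ∈ s) :
    (G.induce W).PreconnectedFibers f := by
  rw [preconnectedFibers_iff_reachable]
  intro u v huv
  obtain ⟨s, hsW, hs, hfs⟩ := h u
  let hom : G.induce s →g (G.induce W).withinFibers f :=
    { toFun := fun x => ⟨x, hsW x.2⟩
      map_rel' := fun {x y} hxy => ⟨hxy, ((hfs _).mpr x.2).trans ((hfs _).mpr y.2).symm⟩ }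
  exact (hs ⟨u, (hfs u).mp rfl⟩ ⟨v, (hfs v).mp huv.symm⟩).map hom

lemma _root_.SimpleGraph.Subgraph.induce_induce_of_subset {X : G.Subgraph} {s t : Set α}
    (h : t ⊆ s) : (X.induce s).induce t = X.induce t := by
  ext u v
  · rfl
  · simp only [Subgraph.induce_adj]
    exact ⟨fun ⟨hu, hv, _, _, huv⟩ => ⟨hu, hv, huv⟩,
      fun ⟨hu, hv, huv⟩ => ⟨hu, hv, h hu, h hv, huv⟩⟩

lemma isSpanningTreeOf_toSubgraph_induce {K : SimpleGraph α} (hK : K ≤ G) {s : Set α}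
    (h : (K.induce s).IsTree) :
    IsSpanningTreeOf G ((SimpleGraph.toSubgraph K hK).induce s) (ind G s) := by
  refine ⟨Subgraph.induce_mono_left le_top, rfl, ?_⟩
  have : ((SimpleGraph.toSubgraph K hK).induce s).coe = K.induce s := by
    ext ⟨u, hu⟩ ⟨v, hv⟩
    exact ⟨fun h => h.2.2, fun h => ⟨hu, hv, h⟩⟩
  rwa [this]

lemma isTree_induce_map_subtype {F : SimpleGraph W} (hF : F.IsAcyclic) {t : Set W} {s : Set α}
    (hsW : s ⊆ W) (hst : ∀ w : W, w ∈ t ↔ (w : α) ∈ s) (hs : s.Nonempty)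
    (ht : (F.induce t).Preconnected) : ((F.map Subtype.val).induce s).IsTree := by
  let e : F.induce t ≃g (F.map Subtype.val).induce s :=
    { toFun := fun w => ⟨w.1, (hst w.1).mp w.2⟩
      invFun := fun x => ⟨⟨x, hsW x.2⟩, (hst _).mpr x.2⟩
      left_inv := fun _ => rfl
      right_inv := fun _ => rfl
      map_rel_iff' := by
        rintro ⟨u, -⟩ ⟨v, -⟩
        exact map_adj_apply (f := Function.Embedding.subtype _) }
  obtain ⟨x, hx⟩ := hs
  have : Nonempty t := ⟨⟨⟨x, hsW hx⟩, (hst _).mpr hx⟩⟩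
  exact e.isTree_iff.mp ⟨(connected_iff _).mpr ⟨ht, this⟩, hF.induce t⟩

lemma isHierTree_induce {η : α → A} {X : G.Subgraph} {s : Set α}
    (hs : IsSpanningTreeOf G (X.induce s) (ind G s))
    (hunits : ∀ a, (s ∩ η ⁻¹' {a}).Nonempty →
      IsSpanningTreeOf G (X.induce (s ∩ η ⁻¹' {a})) (ind G (s ∩ η ⁻¹' {a}))) :
    IsHierTree G η (X.induce s) s :=
  ⟨hs, fun a ha => by
    rw [Subgraph.induce_induce_of_subset Set.inter_subset_left]
    exact hunits a ha⟩

end InducedGraph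

section Component

variable {G : SimpleGraph α} {η : α → A} {S : Set (Set α)}

lemma preconnectedFibers_partOf (hS : S.PairwiseDisjoint id)
    (hconn : ∀ B ∈ S, (G.induce B).Preconnected) :
    (G.induce (⋃₀ S)).PreconnectedFibers (partOf S) :=
  preconnectedFibers_induce fun u => ⟨partOf S u, Set.subset_sUnion_of_mem (partOf_mem u),
    hconn _ (partOf_mem u), partOf_eq_iff hS (partOf_mem u)⟩

lemma preconnectedFibers_partOf_prod (hS : S.PairwiseDisjoint id)
    (hhc : ∀ B ∈ S, HierConnectedBlock G η B) :
    (G.induce (⋃₀ S)).PreconnectedFibers fun w => (partOf S w, η w) :=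
  preconnectedFibers_induce fun u => ⟨partOf S u ∩ η ⁻¹' {η u},
    Set.inter_subset_left.trans (Set.subset_sUnion_of_mem (partOf_mem u)),
    induce_eq_coe_induce_top (G := G) _ ▸ hhc _ (partOf_mem u) (η u),
    fun w => by simp [Prod.ext_iff, partOf_eq_iff hS (partOf_mem u)]⟩

lemma IsAdminComponent.connected_withinFibers_sup {blocks : Set (Set α)}
    (hS : IsAdminComponent G η blocks S) (hdisj : S.PairwiseDisjoint id) (hne : (⋃₀ S).Nonempty)
    (hblock : (G.induce (⋃₀ S)).PreconnectedFibers (partOf S)) :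
    ((G.induce (⋃₀ S)).withinFibers (partOf S) ⊔
      (G.induce (⋃₀ S)).withinFibers fun w => η w).Connected := by
  rw [preconnectedFibers_iff_reachable] at hblock
  set H := (G.induce (⋃₀ S)).withinFibers (partOf S) ⊔
    (G.induce (⋃₀ S)).withinFibers fun w => η w
  have hchain : ∀ {C D}, Relation.ReflTransGen (fun X Y => X ∈ S ∧ Y ∈ S ∧ AdminAdj G η X Y) C D →
      ∀ u v : ⋃₀ S, partOf S u = C → partOf S v = D → H.Reachable u v := by
    intro C D h
    induction h with
    | refl => exact fun u v hu hv => (hblock u v (hu.trans hv.symm)).mono le_sup_left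
    | tail _ hCD ih =>
      obtain ⟨hC, hD, a, p, q, hpq, hp, hq⟩ := hCD
      intro u v hu hv
      let p' : ⋃₀ S := ⟨p, _, hC, hp.1⟩
      let q' : ⋃₀ S := ⟨q, _, hD, hq.1⟩
      have hp'q' : H.Adj p' q' := Or.inr ⟨hpq, hp.2.trans hq.2.symm⟩
      have hq'v := hblock q' v (((partOf_eq_iff hdisj hD q').mpr hq.1).trans hv.symm)
      exact ((ih u p' hu ((partOf_eq_iff hdisj hC p').mpr hp.1)).trans hp'q'.reachable).trans
        (hq'v.mono le_sup_left)
  obtain ⟨x, hx⟩ := hne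
  exact (connected_iff H).mpr ⟨fun u v => hchain (hS.2.2.1 _ (partOf_mem u) _ (partOf_mem v))
    u v rfl rfl, ⟨⟨x, hx⟩⟩⟩

open Classical in
lemma numComponents_eq_ite {s : Set α} (h : (ind G s).coe.Preconnected) :
    numComponents G s = if s.Nonempty then 1 else 0 := by
  have := h.subsingleton_connectedComponent
  unfold numComponents
  split_ifs with hs
  · obtain ⟨x, hx⟩ := hs
    have : Nonempty (ind G s).coe.ConnectedComponent :=
      ⟨(ind G s).coe.connectedComponentMk ⟨x, hx⟩⟩
    exact Nat.card_unique
  · have : IsEmpty (ind G s).verts :=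
      Set.isEmpty_coe_sort.mpr (Set.not_nonempty_iff_eq_empty.mp hs)
    exact Nat.card_of_isEmpty

lemma splits_eq_natCard_range_sub [Finite α] [Fintype A] (hS : S.PairwiseDisjoint id)
    (hhc : ∀ B ∈ S, HierConnectedBlock G η B) :
    splits G η S = Nat.card (Set.range fun w : ⋃₀ S => (partOf S w, η w)) -
      Nat.card (Set.range fun w : ⋃₀ S => η w) := by
  classical
  have hfin : S.Finite := Set.toFinite S
  have hunits : Set.range (fun w : ⋃₀ S => η w) = {a | ∃ B ∈ S, (B ∩ η ⁻¹' {a}).Nonempty} := by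
    ext a
    constructor
    · rintro ⟨⟨u, B, hB, hu⟩, rfl⟩
      exact ⟨B, hB, u, hu, rfl⟩
    · rintro ⟨B, hB, u, hu, rfl⟩
      exact ⟨⟨u, B, hB, hu⟩, rfl⟩
  have hsum : ∑ᶠ a : A, ∑ᶠ B ∈ S, numComponents G (B ∩ η ⁻¹' {a}) =
      ∑ x ∈ hfin.toFinset ×ˢ Finset.univ, if (x.1 ∩ η ⁻¹' {x.2}).Nonempty then 1 else 0 := by
    rw [Finset.sum_product_right, finsum_eq_sum_of_fintype]
    refine Finset.sum_congr rfl fun a _ => ?_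
    rw [finsum_mem_eq_finite_toFinset_sum _ hfin]
    exact Finset.sum_congr rfl fun B hB => numComponents_eq_ite (hhc B (hfin.mem_toFinset.mp hB) a)
  rw [splits, hsum, Finset.sum_boole, Nat.cast_id, Nat.card_coe_set_eq, Nat.card_coe_set_eq,
    hunits, range_partOf_prod hS, ← Set.ncard_coe_finset]
  congr 2
  ext x
  simp

lemma natCard_range_prod_add_one [Finite α] [Fintype A] (hS : S.PairwiseDisjoint id)
    (hne : ∀ B ∈ S, B.Nonempty) (hSne : S.Nonempty) (hhc : ∀ B ∈ S, HierConnectedBlock G η B)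
    (hsplit : splits G η S = S.ncard - 1) :
    Nat.card (Set.range fun w : ⋃₀ S => (partOf S w, η w)) + 1 =
      Nat.card (Set.range (partOf S)) + Nat.card (Set.range fun w : ⋃₀ S => η w) := by
  have hunits : Nat.card (Set.range fun w : ⋃₀ S => η w) ≤
      Nat.card (Set.range fun w : ⋃₀ S => (partOf S w, η w)) := by
    rw [Nat.card_coe_set_eq, Nat.card_coe_set_eq]
    have := Set.ncard_image_le (f := Prod.snd)
      (Set.toFinite (Set.range fun w : ⋃₀ S => (partOf S w, η w)))
    rwa [← Set.range_comp] at this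
  rw [splits_eq_natCard_range_sub hS hhc] at hsplit
  rw [range_partOf hS hne, Nat.card_coe_set_eq S]
  have := (Set.ncard_pos (Set.toFinite S)).mpr hSne
  omega

end Component

end Regions

theorem stmt_16_general {A : Type*} [Fintype A] (G : SimpleGraph V) (η : V → A)
    (r : ℕ) (ξ : Plan G r)
    (hhc : ∀ B ∈ ξ.blocks, HierConnectedBlock G η B)
    (S : Set (Set V)) (hS : IsAdminComponent G η ξ.blocks S)
    (hsplit : splits G η S = S.ncard - 1) :
    ∃ T : G.Subgraph,
      (∀ B ∈ S, IsHierTree G η (T.induce B) B) ∧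
      IsHierTree G η T (⋃₀ S) := by
  classical
  have hdisj : S.PairwiseDisjoint id := ξ.pairwiseDisjoint.subset hS.1
  have hne : ∀ B ∈ S, B.Nonempty := fun B hB => ξ.blocks_nonempty B (hS.1 hB)
  have hsub : ∀ {B}, B ∈ S → B ⊆ ⋃₀ S := Set.subset_sUnion_of_mem
  have hW : (⋃₀ S).Nonempty := Set.nonempty_sUnion.mpr ⟨_, hS.2.1.some_mem, hne _ hS.2.1.some_mem⟩
  have hblock := preconnectedFibers_partOf hdisj fun B hB =>
    (connected_induce_iff.mpr (ξ.blocks_connected B (hS.1 hB))).preconnected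
  obtain ⟨F, hFG, hF, hβ, hη, hπ⟩ := exists_isTree_preconnectedFibers _ _ _
    (preconnectedFibers_partOf_prod hdisj fun B hB => hhc B (hS.1 hB)) hblock
    (hS.connected_withinFibers_sup hdisj hW hblock)
    (natCard_range_prod_add_one hdisj hne hS.2.1 (fun B hB => hhc B (hS.1 hB)) hsplit)
  set X := toSubgraph (F.map Subtype.val)
    ((map_le_iff_le_comap (Function.Embedding.subtype _) _ _).mpr hFG)
  have htree : ∀ {t : Set (⋃₀ S)} {s : Set V}, s ⊆ ⋃₀ S → (∀ w : ⋃₀ S, w ∈ t ↔ (w : V) ∈ s) →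
      s.Nonempty → (F.induce t).Preconnected → IsSpanningTreeOf G (X.induce s) (ind G s) :=
    fun hsW hst hs ht =>
      isSpanningTreeOf_toSubgraph_induce _ (isTree_induce_map_subtype hF.isAcyclic hsW hst hs ht)
  refine ⟨X.induce (⋃₀ S), fun B hB => ?_, ?_⟩
  · rw [Subgraph.induce_induce_of_subset (hsub hB)]
    exact isHierTree_induce (htree (hsub hB) (partOf_eq_iff hdisj hB) (hne B hB) (hβ B))
      fun a ha => htree (Set.inter_subset_left.trans (hsub hB))
        (fun w => by simp [Prod.ext_iff, partOf_eq_iff hdisj hB]) ha (hπ (B, a))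
  · exact isHierTree_induce (htree subset_rfl (fun w => iff_of_true trivial w.2) hW
      ((induceUnivIso F).connected_iff.mpr hF.connected).preconnected)
      fun a ha => htree Set.inter_subset_left (fun w => by simp [w.2]) ha (hη a)

/-- For a hierarchically connected plan `ξ` of a connected graph `G` and a
connected component `𝒞` of its administrative adjacency graph with region set `S`
satisfying `Split(S) = |S| - 1`, there is a tree `T` on `⋃_{G_k ∈ S} V(G_k)` whose
restriction to each region of `S` is an `η`-hierarchical tree on that region and which
is itself an `η`-hierarchical tree on the merged region. -/
theorem stmt_16 {A : Type*} [Fintype A] (G : SimpleGraph V) (η : V → A)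
    (hG : G.Connected) (r : ℕ) (ξ : Plan G r)
    (hhc : ∀ B ∈ ξ.blocks, HierConnectedBlock G η B)
    (S : Set (Set V)) (hS : IsAdminComponent G η ξ.blocks S)
    (hsplit : splits G η S = S.ncard - 1) :
    ∃ T : G.Subgraph,
      (∀ B ∈ S, IsHierTree G η (T.induce B) B) ∧
      IsHierTree G η T (⋃₀ S) :=
  stmt_16_general G η r ξ hhc S hS hsplit

end Redist
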